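/- Let B be a Blaschke product with zero sequence (a_n), let B_1 ≡ 1 and for n ≥ 2 let B_n be the finite Blaschke product with zeros a_1,…,a_{n-1}. Then for every z in the open unit disc U, ∑_{n=1}^∞ |B_n(z)|²·(1-|a_n|²)/|1 - conj(a_n)·z|² = (1-|B(z)|²)/(1-|z|²). -/

import Mathlib

open Complex MeasureTheory

noncomputable section

/-- The open unit disc in ℂ. -/
def unitDisc : Set ℂ := {z : ℂ | ‖z‖ < 1}

/-- A single Blaschke factor with zero `a`. -/
def bFactor (a z : ℂ) : ℂ :=
  ((starRingEnd ℂ) a / (‖a‖ : ℂ)) * ((a - z) / (1 - (starRingEnd ℂ) a * z))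

/-- The Blaschke product with zeros `a n`. -/
def blaschke (a : ℕ → ℂ) (z : ℂ) : ℂ := ∏' n, bFactor (a n) z

/-- The pseudohyperbolic distance on the unit disc. -/
def pdist (z w : ℂ) : ℝ := ‖(z - w) / (1 - (starRingEnd ℂ) w * z)‖

/-- The weighted Bergman integral `∬_U |g(z)|^p (1-|z|)^α dA(z)`;
`g ∈ A^p_α` means this is finite. -/
def bergman (g : ℂ → ℂ) (p α : ℝ) : ENNReal :=
  ∫⁻ z in unitDisc, ENNReal.ofReal (‖g z‖ ^ p * (1 - ‖z‖) ^ α)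

/-- The finite subproduct `B_n` with zeros `a 0, …, a (n-1)` (`subProd a 0 = 1`). -/
def subProd (a : ℕ → ℂ) (n : ℕ) (z : ℂ) : ℂ := ∏ m ∈ Finset.range n, bFactor (a m) z

/-- The orthonormal basis functions `g_n(z) = B_n(z)·(1-|a_n|²)^{1/2}/(1 - conj(a_n)·z)`
of the model space `(BH²)^⊥`. -/
def gfun (a : ℕ → ℂ) (n : ℕ) (z : ℂ) : ℂ :=
  subProd a n z * (Real.sqrt (1 - ‖a n‖ ^ 2) : ℂ) / (1 - (starRingEnd ℂ) (a n) * z)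

/-!
Since `|1 - ā z|² - |a - z|² = (1 - |a|²)(1 - |z|²)`, the `n`-th term of the series is
`(|B_n(z)|² - |B_{n+1}(z)|²) / (1 - |z|²)`. The series therefore telescopes to
`(1 - |B_N(z)|²) / (1 - |z|²)`, and `B_N(z) → B(z)` because the Blaschke condition
makes `∑ ‖bFactor (a n) z - 1‖` converge: its terms are at most `2(1 - |a_n|)/(1 - |z|)`.
-/

open Filter Topology ComplexConjugate

lemma norm_one_sub_conj_mul_sq_sub_norm_sub_sq (a z : ℂ) :
    ‖1 - conj a * z‖ ^ 2 - ‖a - z‖ ^ 2 = (1 - ‖a‖ ^ 2) * (1 - ‖z‖ ^ 2) := by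
  simp only [Complex.sq_norm, Complex.normSq_apply, Complex.sub_re, Complex.sub_im,
    Complex.mul_re, Complex.mul_im, Complex.conj_re, Complex.conj_im, Complex.one_re,
    Complex.one_im]
  ring

lemma one_sub_norm_le_norm_one_sub_conj_mul {a : ℂ} (ha : ‖a‖ ≤ 1) (z : ℂ) :
    1 - ‖z‖ ≤ ‖1 - conj a * z‖ := by
  have hmul : ‖conj a * z‖ ≤ ‖z‖ := by
    rw [norm_mul, Complex.norm_conj]
    exact mul_le_of_le_one_left (norm_nonneg z) ha
  have htri := norm_sub_norm_le (1 : ℂ) (conj a * z)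
  rw [norm_one] at htri
  linarith

lemma norm_one_sub_conj_mul_pos {a z : ℂ} (ha : ‖a‖ ≤ 1) (hz : ‖z‖ < 1) :
    0 < ‖1 - conj a * z‖ :=
  (sub_pos.2 hz).trans_le (one_sub_norm_le_norm_one_sub_conj_mul ha z)

lemma norm_bFactor {a : ℂ} (ha : a ≠ 0) (z : ℂ) :
    ‖bFactor a z‖ = ‖a - z‖ / ‖1 - conj a * z‖ := by
  rw [bFactor, norm_mul, norm_div, norm_div, Complex.norm_conj, Complex.norm_real, norm_norm,
    div_self (norm_ne_zero_iff.2 ha), one_mul]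

lemma bFactor_sub_one {a z : ℂ} (ha : a ≠ 0) (hD : 1 - conj a * z ≠ 0) :
    bFactor a z - 1 = (‖a‖ - 1) * (1 + conj a / ‖a‖ * z) / (1 - conj a * z) := by
  have hnorm : (‖a‖ : ℂ) ≠ 0 := by exact_mod_cast norm_ne_zero_iff.2 ha
  rw [bFactor, eq_div_iff hD]
  field_simp
  linear_combination Complex.conj_mul' a

lemma norm_bFactor_sub_one_le {a z : ℂ} (ha0 : a ≠ 0) (ha1 : ‖a‖ ≤ 1) (hz : ‖z‖ < 1) :
    ‖bFactor a z - 1‖ ≤ 2 / (1 - ‖z‖) * (1 - ‖a‖) := by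
  have hD := norm_one_sub_conj_mul_pos ha1 hz
  have hnum : ‖((‖a‖ : ℂ) - 1) * (1 + conj a / ‖a‖ * z)‖ ≤ (1 - ‖a‖) * 2 := by
    have h1 : ‖(‖a‖ : ℂ) - 1‖ = 1 - ‖a‖ := by
      rw [← norm_neg, neg_sub, ← Complex.ofReal_one, ← Complex.ofReal_sub, Complex.norm_real,
        Real.norm_of_nonneg (sub_nonneg.2 ha1)]
    have h2 : ‖1 + conj a / ‖a‖ * z‖ ≤ 2 := by
      calc ‖1 + conj a / ‖a‖ * z‖ ≤ 1 + ‖z‖ := by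
            refine (norm_add_le _ _).trans ?_
            rw [norm_one, norm_mul, norm_div, Complex.norm_conj, Complex.norm_real, norm_norm,
              div_self (norm_ne_zero_iff.2 ha0), one_mul]
        _ ≤ 2 := by linarith
    rw [norm_mul, h1]
    exact mul_le_mul_of_nonneg_left h2 (sub_nonneg.2 ha1)
  rw [bFactor_sub_one ha0 (norm_pos_iff.1 hD), norm_div, div_le_iff₀ hD]
  calc _ ≤ (1 - ‖a‖) * 2 := hnum
    _ = 2 / (1 - ‖z‖) * (1 - ‖a‖) * (1 - ‖z‖) := by field_simp [(sub_pos.2 hz).ne']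
    _ ≤ _ := by
        gcongr
        exact one_sub_norm_le_norm_one_sub_conj_mul ha1 z

section Blaschke

variable {a : ℕ → ℂ} {z : ℂ}

lemma multipliable_bFactor (ha0 : ∀ n, a n ≠ 0) (ha1 : ∀ n, ‖a n‖ ≤ 1)
    (hsum : Summable fun n => 1 - ‖a n‖) (hz : ‖z‖ < 1) :
    Multipliable fun n => bFactor (a n) z := by
  have hbound : Summable fun n => ‖bFactor (a n) z - 1‖ :=
    (hsum.mul_left (2 / (1 - ‖z‖))).of_nonneg_of_le (fun _ => norm_nonneg _)
      fun n => norm_bFactor_sub_one_le (ha0 n) (ha1 n) hz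
  simpa using multipliable_one_add_of_summable hbound

lemma tendsto_subProd_blaschke (ha0 : ∀ n, a n ≠ 0) (ha1 : ∀ n, ‖a n‖ ≤ 1)
    (hsum : Summable fun n => 1 - ‖a n‖) (hz : ‖z‖ < 1) :
    Tendsto (fun N => subProd a N z) atTop (𝓝 (blaschke a z)) :=
  (multipliable_bFactor ha0 ha1 hsum hz).hasProd.tendsto_prod_nat

lemma norm_subProd_succ_sq {n : ℕ} (ha : a n ≠ 0) :
    ‖subProd a (n + 1) z‖ ^ 2 = ‖subProd a n z‖ ^ 2 * ‖a n - z‖ ^ 2 / ‖1 - conj (a n) * z‖ ^ 2 := by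
  rw [subProd, Finset.prod_range_succ, norm_mul, norm_bFactor ha, ← subProd]
  ring

lemma norm_subProd_sq_mul_div_eq {n : ℕ} (ha0 : a n ≠ 0) (ha1 : ‖a n‖ ≤ 1) (hz : ‖z‖ < 1) :
    ‖subProd a n z‖ ^ 2 * (1 - ‖a n‖ ^ 2) / ‖1 - conj (a n) * z‖ ^ 2 =
      (‖subProd a n z‖ ^ 2 - ‖subProd a (n + 1) z‖ ^ 2) / (1 - ‖z‖ ^ 2) := by
  have hD := (norm_one_sub_conj_mul_pos ha1 hz).ne'
  have hs : 1 - ‖z‖ ^ 2 ≠ 0 := by nlinarith [norm_nonneg z]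
  rw [norm_subProd_succ_sq ha0, div_eq_div_iff (pow_ne_zero 2 hD) hs, sub_mul, div_mul_cancel₀ _ (pow_ne_zero 2 hD)]
  linear_combination -‖subProd a n z‖ ^ 2 * norm_one_sub_conj_mul_sq_sub_norm_sub_sq (a n) z

lemma sum_range_norm_subProd_sq_mul_div (ha0 : ∀ n, a n ≠ 0) (ha1 : ∀ n, ‖a n‖ ≤ 1)
    (hz : ‖z‖ < 1) (N : ℕ) :
    ∑ n ∈ Finset.range N, ‖subProd a n z‖ ^ 2 * (1 - ‖a n‖ ^ 2) / ‖1 - conj (a n) * z‖ ^ 2 =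
      (1 - ‖subProd a N z‖ ^ 2) / (1 - ‖z‖ ^ 2) := by
  simp only [norm_subProd_sq_mul_div_eq (ha0 _) (ha1 _) hz]
  rw [← Finset.sum_div, Finset.sum_range_sub' (fun n => ‖subProd a n z‖ ^ 2)]
  simp [subProd]

lemma hasSum_norm_subProd_sq_mul_div (ha0 : ∀ n, a n ≠ 0) (ha1 : ∀ n, ‖a n‖ ≤ 1)
    (hsum : Summable fun n => 1 - ‖a n‖) (hz : ‖z‖ < 1) :
    HasSum (fun n => ‖subProd a n z‖ ^ 2 * (1 - ‖a n‖ ^ 2) / ‖1 - conj (a n) * z‖ ^ 2)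
      ((1 - ‖blaschke a z‖ ^ 2) / (1 - ‖z‖ ^ 2)) := by
  have hnonneg : ∀ n, 0 ≤ ‖subProd a n z‖ ^ 2 * (1 - ‖a n‖ ^ 2) / ‖1 - conj (a n) * z‖ ^ 2 :=
    fun n => by
      have : 0 ≤ 1 - ‖a n‖ ^ 2 := by nlinarith [ha1 n, norm_nonneg (a n)]
      positivity
  rw [hasSum_iff_tendsto_nat_of_nonneg hnonneg]
  simp only [sum_range_norm_subProd_sq_mul_div ha0 ha1 hz]
  have hnorm := (tendsto_subProd_blaschke ha0 ha1 hsum hz).norm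
  exact ((hnorm.pow 2).const_sub 1).div_const _

end Blaschke

/-- The squared norm of the reproducing kernel of the model space, computed via the
orthonormal basis: `∑_n |B_n(z)|²(1-|a_n|²)/|1-conj(a_n)z|² = (1-|B(z)|²)/(1-|z|²)`. -/
theorem stmt14 (a : ℕ → ℂ)
    (ha : ∀ n, 0 < ‖a n‖ ∧ ‖a n‖ < 1)
    (hblaschke : Summable (fun n => 1 - ‖a n‖))
    (B : ℂ → ℂ) (hB : ∀ z ∈ unitDisc, B z = blaschke a z) :
    ∀ z ∈ unitDisc,
      ∑' n, ‖subProd a n z‖ ^ 2 * (1 - ‖a n‖ ^ 2) /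
          ‖1 - (starRingEnd ℂ) (a n) * z‖ ^ 2 =
        (1 - ‖B z‖ ^ 2) / (1 - ‖z‖ ^ 2) := by
  intro z hz
  rw [hB z hz]
  exact (hasSum_norm_subProd_sq_mul_div (fun n => norm_pos_iff.1 (ha n).1)
    (fun n => (ha n).2.le) hblaschke hz).tsum_eq
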